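/- Let f: X → Y be a surjective holomorphic map of compact Kähler manifolds of positive dimension, and let T be a closed positive current of bidimension (1,1) on X whose class [T] lies in the interior of the dual Kähler cone K*(X). Then [f_*T] lies in the interior of K*(Y). -/

import Mathlib

/-!
A functional in the interior of the dual cone of a cone `C` is strictly positive on `C \ {0}`
(perturb it by a small multiple of a norming functional of `β`). Conversely, in finite dimension a
functional strictly positive on a closed cone `C \ {0}` is bounded below by `m ‖β‖` on `C`, by
compactness of `C ∩ sphere 0 1`, and such a bound survives perturbations of norm `< m`. Since `f*`
is injective and maps `closure KY` into `closure KX`, `T ∘ f*` is strictly positive on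
`closure KY \ {0}`.
-/

open Filter Topology

section DualCone

variable {E : Type*} [NormedAddCommGroup E] [NormedSpace ℝ E]

def dualCone (C : Set E) : Set (E →L[ℝ] ℝ) :=
  {S | ∀ β ∈ C, 0 ≤ S β}

theorem pos_of_mem_interior_dualCone {C : Set E} {T : E →L[ℝ] ℝ}
    (hT : T ∈ interior (dualCone C)) {β : E} (hβ : β ∈ C) (hβ0 : β ≠ 0) : 0 < T β := by
  obtain ⟨g, -, hgβ⟩ := exists_dual_vector ℝ β (norm_ne_zero_iff.mpr hβ0)
  have hpert : Tendsto (fun t : ℝ => T - t • g) (𝓝 0) (𝓝 T) :=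
    Continuous.tendsto' (by fun_prop) 0 T (by simp)
  have hev : ∀ᶠ t in 𝓝[>] (0 : ℝ), T - t • g ∈ dualCone C :=
    nhdsWithin_le_nhds (hpert.eventually_mem (mem_interior_iff_mem_nhds.mp hT))
  obtain ⟨t, hmem, ht⟩ := (hev.and self_mem_nhdsWithin).exists
  have hβpos : 0 < ‖β‖ := norm_pos_iff.mpr hβ0
  have hle : t * ‖β‖ ≤ T β := by
    simpa [hgβ, sub_nonneg] using hmem β hβ
  exact (mul_pos ht hβpos).trans_le hle

theorem mem_interior_dualCone_of_mul_norm_le {C : Set E} {φ : E →L[ℝ] ℝ} {m : ℝ} (hm : 0 < m)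
    (hφ : ∀ β ∈ C, m * ‖β‖ ≤ φ β) : φ ∈ interior (dualCone C) := by
  refine mem_interior.mpr ⟨Metric.ball φ m, fun S hS β hβ => ?_, Metric.isOpen_ball,
    Metric.mem_ball_self hm⟩
  have hSφ : ‖S - φ‖ < m := by rwa [Metric.mem_ball, dist_eq_norm] at hS
  calc 0 ≤ (m - ‖S - φ‖) * ‖β‖ := mul_nonneg (sub_nonneg.mpr hSφ.le) (norm_nonneg β)
    _ = m * ‖β‖ - ‖S - φ‖ * ‖β‖ := by ring
    _ ≤ φ β - ‖(S - φ) β‖ := sub_le_sub (hφ β hβ) ((S - φ).le_opNorm β)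
    _ ≤ φ β + (S - φ) β := by linarith [neg_abs_le ((S - φ) β), Real.norm_eq_abs ((S - φ) β)]
    _ = S β := by simp

theorem exists_pos_mul_norm_le_of_pos [FiniteDimensional ℝ E] {C : Set E} (hC : IsClosed C)
    (hcone : ∀ x ∈ C, ∀ t : ℝ, 0 < t → t • x ∈ C) {φ : E →L[ℝ] ℝ}
    (hφ : ∀ β ∈ C, β ≠ 0 → 0 < φ β) : ∃ m > 0, ∀ β ∈ C, m * ‖β‖ ≤ φ β := by
  obtain ⟨m, hm, hmin⟩ := ((isCompact_sphere (0 : E) 1).inter_right hC).exists_forall_le'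
    φ.continuous.continuousOn fun β hβ => hφ β hβ.2 (ne_zero_of_mem_unit_sphere ⟨β, hβ.1⟩)
  refine ⟨m, hm, fun β hβ => ?_⟩
  rcases eq_or_ne β 0 with rfl | hβ0
  · simp
  have hβpos : 0 < ‖β‖ := norm_pos_iff.mpr hβ0
  have hunit : ‖β‖⁻¹ • β ∈ Metric.sphere (0 : E) 1 ∩ C :=
    ⟨by simp [norm_smul, hβpos.ne'], hcone β hβ _ (inv_pos.mpr hβpos)⟩
  have h := hmin _ hunit
  rw [map_smul, smul_eq_mul, le_inv_mul_iff₀ hβpos] at h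
  linarith

end DualCone

theorem pushforward_interior_dual_kahler_cone_general
    {V W : Type*} [NormedAddCommGroup V] [NormedSpace ℝ V]
    [NormedAddCommGroup W] [NormedSpace ℝ W] [FiniteDimensional ℝ W]
    (KX : Set V)
    (KY : Set W)
    (hKYcone : ∀ x ∈ KY, ∀ t : ℝ, 0 < t → t • x ∈ KY)
    (fstar : W →L[ℝ] V)                               -- the pullback f*
    (hinj : Function.Injective fstar)
    (hmaps : ∀ β ∈ closure KY, fstar β ∈ closure KX)
    (T : V →L[ℝ] ℝ)                                   -- the class [T]
    (hT : T ∈ interior {S : V →L[ℝ] ℝ | ∀ β ∈ closure KX, 0 ≤ S β}) :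
    T.comp fstar ∈ interior {S : W →L[ℝ] ℝ | ∀ β ∈ closure KY, 0 ≤ S β} := by
  have hcone : ∀ β ∈ closure KY, ∀ t : ℝ, 0 < t → t • β ∈ closure KY := fun β hβ t ht =>
    map_mem_closure (continuous_const_smul t) hβ fun x hx => hKYcone x hx t ht
  have hpos : ∀ β ∈ closure KY, β ≠ 0 → 0 < T.comp fstar β := fun β hβ hβ0 =>
    pos_of_mem_interior_dualCone hT (hmaps β hβ) ((map_ne_zero_iff fstar hinj).mpr hβ0)
  obtain ⟨m, hm, hbound⟩ := exists_pos_mul_norm_le_of_pos isClosed_closure hcone hpos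
  exact mem_interior_dualCone_of_mul_norm_le hm hbound

/-- **Pushforward of interior points of the dual Kähler cone.**
Let `f : X → Y` be a surjective holomorphic map of compact Kähler manifolds of
positive dimension.  We model `H²(X,ℝ)` and `H²(Y,ℝ)` by finite-dimensional real
vector spaces `V` and `W`, the Kähler cones `KX ⊂ V`, `KY ⊂ W` by nonempty open
convex cones, and the pullback `f* : H²(Y,ℝ) → H²(X,ℝ)` by an injective linear map
carrying `closure KY` into `closure KX` (both hold since `f` is surjective).
A class in `H^{n-1,n-1}` is identified with the linear functional it induces on
`H^{1,1}` via the perfect cup-product pairing; the dual Kähler cone is the set of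
functionals nonnegative on the closed Kähler cone, and the pushforward of the class
`[T]` of a closed positive `(1,1)`-bidimensional current `T` is `T ∘ f*`.
If `[T]` lies in the interior of `K*(X)`, then `[f_*T]` lies in the interior of
`K*(Y)`. -/
theorem pushforward_interior_dual_kahler_cone
    {V W : Type*} [NormedAddCommGroup V] [NormedSpace ℝ V] [FiniteDimensional ℝ V]
    [NormedAddCommGroup W] [NormedSpace ℝ W] [FiniteDimensional ℝ W]
    (KX : Set V) (hKXopen : IsOpen KX) (hKXconv : Convex ℝ KX) (hKXne : KX.Nonempty)
    (hKXcone : ∀ x ∈ KX, ∀ t : ℝ, 0 < t → t • x ∈ KX)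
    (KY : Set W) (hKYopen : IsOpen KY) (hKYconv : Convex ℝ KY) (hKYne : KY.Nonempty)
    (hKYcone : ∀ x ∈ KY, ∀ t : ℝ, 0 < t → t • x ∈ KY)
    (fstar : W →L[ℝ] V)                               -- the pullback f*
    (hinj : Function.Injective fstar)
    (hmaps : ∀ β ∈ closure KY, fstar β ∈ closure KX)
    (T : V →L[ℝ] ℝ)                                   -- the class [T]
    (hT : T ∈ interior {S : V →L[ℝ] ℝ | ∀ β ∈ closure KX, 0 ≤ S β}) :
    T.comp fstar ∈ interior {S : W →L[ℝ] ℝ | ∀ β ∈ closure KY, 0 ≤ S β} :=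
  pushforward_interior_dual_kahler_cone_general KX KY hKYcone fstar hinj hmaps T hT
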